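/- arXiv:2106.15140 — 2 statements merged into one kernel-verified Lean document; each statement's English description precedes it below -/
import Mathlib

section
/- Under the assumptions of the preceding factorization (z_j nonzero pairwise distinct with z_j^{2N} ≠ 1, γ_j ≠ 0, M < N, S ∪ Γ a partition of {0,...,2N-1} with |S| = M+1), the Loewner matrix L = ((ω^ℓ f̂_ℓ - ω^k f̂_k)/(ω^{-ℓ} - ω^{-k}))_{ℓ∈Γ, k∈S} of size (2N-M-1)×(M+1) has rank exactly M. -/
/-!
Summing the geometric series in `ℓ` shows that `g k = r (ω⁻¹ ^ k)` for the rational function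
`r t = ∑ j, a j / (t - z j)` with residues `a j = γ j * (1 - z j ^ (2 * N)) ≠ 0`. The Loewner matrix
of such an `r` on disjoint node sets `x`, `y` factors as `C(x) * diag(-a) * C(y)ᵀ` with Cauchy
matrices `C(x) = ((x i - z j)⁻¹)`. A Cauchy matrix with at least as many distinct rows as columns
is injective: a kernel vector `v` yields the polynomial `∑ j, v j * ∏ m ≠ j, (X - z m)` of degree
`< M` vanishing at all the nodes, so it is zero, and evaluating it at `z j` gives `v j = 0`.
Since `|Γ| = 2N - M - 1 ≥ M` and `|S| = M + 1`, both Cauchy factors have rank `M`, hence so does `L`.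
-/

open Finset Matrix

namespace Matrix

variable {K : Type*} [Field K] {ι κ : Type*}

def cauchy (x : ι → K) (z : κ → K) : Matrix ι κ K :=
  of fun i j => (x i - z j)⁻¹

def loewner (r : K → K) (x : ι → K) (y : κ → K) : Matrix ι κ K :=
  of fun i k => (r (x i) - r (y k)) / (x i - y k)

open Polynomial Lagrange in
theorem cauchy_mulVec_injective [Fintype ι] [Fintype κ] [DecidableEq κ] {x : ι → K} {z : κ → K}
    (hx : Function.Injective x) (hz : Function.Injective z) (hxz : ∀ i j, x i ≠ z j)
    (hcard : Fintype.card κ ≤ Fintype.card ι) : Function.Injective (cauchy x z).mulVec := by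
  rw [← coe_mulVecLin, ← LinearMap.ker_eq_bot, ker_mulVecLin_eq_bot_iff]
  intro v hv
  rcases isEmpty_or_nonempty κ with hκ | hκ
  · exact Subsingleton.elim _ _
  set P : K[X] := ∑ j, C (v j) * nodal (univ.erase j) z
  have hdeg : P.natDegree < Fintype.card ι := by
    refine lt_of_le_of_lt (natDegree_sum_le_of_forall_le _ _ fun j _ => ?_)
      (Nat.sub_one_lt_of_le Fintype.card_pos hcard)
    refine natDegree_C_mul_le _ _ |>.trans_eq ?_
    simp [card_erase_of_mem]
  have hP_node : ∀ i, P.eval (x i) = 0 := by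
    intro i
    have herase : ∀ j, ∏ m ∈ univ.erase j, (x i - z m) = (x i - z j)⁻¹ * ∏ m, (x i - z m) :=
      fun j => by rw [← mul_prod_erase univ _ (mem_univ j),
        inv_mul_cancel_left₀ (sub_ne_zero.mpr (hxz i j))]
    calc P.eval (x i) = (cauchy x z *ᵥ v) i * ∏ m, (x i - z m) := by
          simp only [P, eval_finsetSum, eval_mul, eval_C, eval_nodal, herase, mulVec,
            dotProduct, cauchy, of_apply, sum_mul]
          exact sum_congr rfl fun j _ => by ring
      _ = 0 := by rw [hv, Pi.zero_apply, zero_mul]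
  have hP : P = 0 := eq_zero_of_natDegree_lt_card_of_eval_eq_zero P hx hP_node hdeg
  funext j
  have hPz : P.eval (z j) = v j * (nodal (univ.erase j) z).eval (z j) := by
    simp only [P, eval_finsetSum, eval_mul, eval_C]
    refine sum_eq_single j (fun m _ hmj => ?_) (by simp)
    rw [eval_nodal_at_node (mem_erase.mpr ⟨Ne.symm hmj, mem_univ j⟩), mul_zero]
  rw [hP, eval_zero, eq_comm, mul_eq_zero] at hPz
  exact hPz.resolve_right (eval_nodal_not_at_node fun m hm h =>
    (mem_erase.mp hm).1 (hz h).symm)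

theorem rank_of_mulVec_injective {m n : Type*} [Fintype n] {A : Matrix m n K}
    (hA : Function.Injective A.mulVec) : A.rank = Fintype.card n := by
  rw [rank, LinearMap.finrank_range_of_inj hA, Module.finrank_fintype_fun_eq_card]

theorem rank_mul_eq_right_of_mulVec_injective {m n p : Type*} [Fintype n] [Fintype p]
    {A : Matrix m n K} (B : Matrix n p K) (hA : Function.Injective A.mulVec) :
    (A * B).rank = B.rank := by
  rw [rank, rank, mulVecLin_mul, LinearMap.range_comp,
    ← (Submodule.equivMapOfInjective A.mulVecLin hA _).finrank_eq]

theorem loewner_sum_div_sub_eq {μ : Type*} [Fintype μ] [DecidableEq μ] (a z : μ → K)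
    {x : ι → K} {y : κ → K} (hxy : ∀ i k, x i ≠ y k) (hxz : ∀ i j, x i ≠ z j)
    (hyz : ∀ k j, y k ≠ z j) :
    loewner (fun t => ∑ j, a j / (t - z j)) x y = cauchy x z * diagonal (-a) * (cauchy y z)ᵀ := by
  ext i k
  simp only [loewner, cauchy, of_apply, mul_apply, diagonal_apply, transpose_apply, mul_ite,
    Pi.neg_apply, mul_zero, sum_ite_eq', mem_univ, if_true, ← sum_sub_distrib, sum_div]
  refine sum_congr rfl fun j _ => ?_
  have := sub_ne_zero.mpr (hxy i k)
  have := sub_ne_zero.mpr (hxz i j)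
  have := sub_ne_zero.mpr (hyz k j)
  field_simp
  ring

end Matrix

theorem mul_geom_sum_eq_div_inv_sub {K : Type*} [Field K] {n : ℕ} {ζ z : K} (hζ : ζ ^ n = 1)
    (hz : z ^ n ≠ 1) : ζ * ∑ ℓ ∈ range n, (z * ζ) ^ ℓ = (1 - z ^ n) / (ζ⁻¹ - z) := by
  have hn : n ≠ 0 := by rintro rfl; exact hz (pow_zero z)
  have hζ0 : ζ ≠ 0 := by rintro rfl; simp [hn] at hζ
  have hzζ : z * ζ ≠ 1 := fun h => hz (by simpa [mul_pow, hζ] using congrArg (· ^ n) h)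
  have : ζ⁻¹ - z ≠ 0 := fun h => hzζ (by rw [← sub_eq_zero.mp h, inv_mul_cancel₀ hζ0])
  rw [geom_sum_eq hzζ, mul_pow, hζ, mul_one]
  field_simp
  rw [← neg_sub 1 (z ^ n), ← neg_sub 1 (ζ * z), neg_div_neg_eq]

theorem pow_mul_dft_exp_sum_eq_sum_div {K μ : Type*} [Field K] [Fintype μ] {n : ℕ} {ω : K}
    (hω : ω ^ n = 1) (γ z : μ → K) (hz : ∀ j, z j ^ n ≠ 1) (k : ℕ) :
    ω ^ k * ∑ ℓ ∈ range n, (∑ j, γ j * z j ^ ℓ) * ω ^ (k * ℓ)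
      = ∑ j, γ j * (1 - z j ^ n) / (ω⁻¹ ^ k - z j) := by
  have hωk : (ω ^ k) ^ n = 1 := by rw [← pow_mul, mul_comm, pow_mul, hω, one_pow]
  simp_rw [sum_mul, mul_sum]
  rw [sum_comm]
  refine sum_congr rfl fun j _ => ?_
  rw [mul_div_assoc, inv_pow, ← mul_geom_sum_eq_div_inv_sub hωk (hz j), mul_sum, mul_sum]
  refine sum_congr rfl fun ℓ _ => ?_
  rw [pow_mul, mul_pow]
  ring

theorem loewner_rank_general (M N : ℕ) (hMN : M < N)
    (γ z : Fin M → ℂ) (hγ : ∀ j, γ j ≠ 0)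
    (hzinj : Function.Injective z) (hz2N : ∀ j, z j ^ (2 * N) ≠ 1)
    (ω : ℂ) (hω : ω = Complex.exp (-(2 * Real.pi * Complex.I) / (2 * (N : ℂ))))
    (f fhat g : ℕ → ℂ)
    (hf : ∀ k, f k = ∑ j, γ j * z j ^ k)
    (hfhat : ∀ m, fhat m = ∑ ℓ ∈ Finset.range (2 * N), f ℓ * ω ^ (m * ℓ))
    (hg : ∀ k, g k = ω ^ k * fhat k)
    (S Γ : Finset (Fin (2 * N))) (hdisj : Disjoint S Γ)
    (hunion : S ∪ Γ = Finset.univ) (hScard : S.card = M + 1)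
    (L : Matrix ↥Γ ↥S ℂ)
    (hL : ∀ ℓ k, L ℓ k = (g ℓ.1.1 - g k.1.1) / (ω⁻¹ ^ ℓ.1.1 - ω⁻¹ ^ k.1.1)) :
    L.rank = M := by
  have hprim : IsPrimitiveRoot ω⁻¹ (2 * N) := by
    convert Complex.isPrimitiveRoot_exp (2 * N) (by omega) using 1
    rw [hω, ← Complex.exp_neg]
    push_cast
    ring_nf
  set x : Fin (2 * N) → ℂ := fun k => ω⁻¹ ^ (k : ℕ)
  have hx : Function.Injective x := fun k l h => Fin.ext (hprim.pow_inj k.2 l.2 h)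
  have hxz : ∀ k j, x k ≠ z j := fun k j h =>
    hz2N j (by rw [← h, ← pow_mul, mul_comm, pow_mul, hprim.pow_eq_one, one_pow])
  set a : Fin M → ℂ := fun j => γ j * (1 - z j ^ (2 * N))
  have hLoewner : L = loewner (fun t => ∑ j, a j / (t - z j))
      (x ∘ Subtype.val : Γ → ℂ) (x ∘ Subtype.val : S → ℂ) := by
    have hω2N : ω ^ (2 * N) = 1 := inv_eq_one.mp (inv_pow ω _ ▸ hprim.pow_eq_one)
    ext ℓ k
    simp only [hL, loewner, of_apply, Function.comp_apply, x, a, hg, hfhat, hf,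
      pow_mul_dft_exp_sum_eq_sum_div hω2N γ z hz2N]
  have hcard : S.card + Γ.card = 2 * N := by
    rw [← card_union_of_disjoint hdisj, hunion, card_univ, Fintype.card_fin]
  have hCΓ : Function.Injective (cauchy (x ∘ Subtype.val : Γ → ℂ) z).mulVec :=
    cauchy_mulVec_injective (hx.comp Subtype.val_injective) hzinj (fun ℓ => hxz ℓ)
      (by rw [Fintype.card_fin, Fintype.card_coe]; omega)
  have hCS : Function.Injective (cauchy (x ∘ Subtype.val : S → ℂ) z).mulVec :=
    cauchy_mulVec_injective (hx.comp Subtype.val_injective) hzinj (fun k => hxz k)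
      (by rw [Fintype.card_fin, Fintype.card_coe]; omega)
  have hdet : IsUnit (diagonal (-a)).det := by
    refine isUnit_iff_ne_zero.mpr (det_diagonal (d := -a) ▸ prod_ne_zero_iff.mpr fun j _ => ?_)
    exact neg_ne_zero.mpr (mul_ne_zero (hγ j) (sub_ne_zero.mpr (hz2N j).symm))
  rw [hLoewner, loewner_sum_div_sub_eq (x := x ∘ Subtype.val) (y := x ∘ Subtype.val) a z
      (fun ℓ k h => disjoint_left.mp hdisj k.2 (hx h ▸ ℓ.2)) (fun ℓ => hxz ℓ) (fun k => hxz k),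
    Matrix.mul_assoc,
    rank_mul_eq_right_of_mulVec_injective _ hCΓ, rank_mul_eq_right_of_isUnit_det _ _ hdet,
    rank_transpose, rank_of_mulVec_injective hCS, Fintype.card_fin]

theorem loewner_rank (M N : ℕ) (hMN : M < N)
    (γ z : Fin M → ℂ) (hγ : ∀ j, γ j ≠ 0) (hz0 : ∀ j, z j ≠ 0)
    (hzinj : Function.Injective z) (hz2N : ∀ j, z j ^ (2 * N) ≠ 1)
    (ω : ℂ) (hω : ω = Complex.exp (-(2 * Real.pi * Complex.I) / (2 * (N : ℂ))))
    (f fhat g : ℕ → ℂ)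
    (hf : ∀ k, f k = ∑ j, γ j * z j ^ k)
    (hfhat : ∀ m, fhat m = ∑ ℓ ∈ Finset.range (2 * N), f ℓ * ω ^ (m * ℓ))
    (hg : ∀ k, g k = ω ^ k * fhat k)
    (S Γ : Finset (Fin (2 * N))) (hdisj : Disjoint S Γ)
    (hunion : S ∪ Γ = Finset.univ) (hScard : S.card = M + 1)
    (L : Matrix ↥Γ ↥S ℂ)
    (hL : ∀ ℓ k, L ℓ k = (g ℓ.1.1 - g k.1.1) / (ω⁻¹ ^ ℓ.1.1 - ω⁻¹ ^ k.1.1)) :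
    L.rank = M :=
  loewner_rank_general M N hMN γ z hγ hzinj hz2N ω hω f fhat g hf hfhat hg S Γ hdisj hunion hScard L
    hL
end

section
/- In the setting of the Hankel–Loewner factorization, with S ∪ Γ a partition of {0,...,2N-1}, |S| = M, u⁽¹⁾ = (ω^{-ℓ})_{ℓ∈Γ}, u⁽²⁾ = (ω^{-k})_{k∈S}: the shifted Loewner matrix L(1) := ((f̂_ℓ - f̂_k)/(ω^{-ℓ} - ω^{-k}))_{ℓ∈Γ,k∈S} satisfies L(1) = Q_{2N-M,2N-M}(u⁽¹⁾) · H(1) · Q_{M,M}(u⁽²⁾)^T, where H(1) = (f_{k+ℓ+1})_{ℓ=0..2N-M-1, k=0..M-1}. -/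
/-!
Both sides equal `∑ j, γ j * z j * p_ℓ (z j) * q_k (z j)`, where `p_ℓ = ∏_{n ∈ Γ \ {ℓ}} (X - ω⁻¹ ^ n)`
and `q_k = ∏_{n ∈ S \ {k}} (X - ω⁻¹ ^ n)`. On the right this comes from the Vandermonde
factorisation `H(1) = Vᵀ diag(γ j * z j) V`. On the left, the DFT of `t ↦ x ^ t` at frequency `a`
is the geometric sum `∑ t, (ω ^ a x) ^ t = ω⁻¹ ^ a ∏_{i ≠ a} (x - ω⁻¹ ^ i)`, because the `ω⁻¹ ^ i`
are the roots of `X ^ (2N) - 1`. The difference of two such sums is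
`(ω⁻¹ ^ ℓ - ω⁻¹ ^ k) x ∏_{i ≠ ℓ, k} (x - ω⁻¹ ^ i)`, and the partition `S ∪ Γ` splits the last
product into `p_ℓ (x) q_k (x)`.
-/

open Finset Matrix Polynomial

theorem Finset.mul_prod_erase_sub_mul_prod_erase {ι R : Type*} [CommRing R] [DecidableEq ι]
    {s : Finset ι} {a b : ι} (ha : a ∈ s) (hb : b ∈ s) (hab : a ≠ b) (c : ι → R) (x : R) :
    c a * ∏ i ∈ s.erase a, (x - c i) - c b * ∏ i ∈ s.erase b, (x - c i)
      = (c a - c b) * x * ∏ i ∈ (s.erase a).erase b, (x - c i) := by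
  rw [← mul_prod_erase (s.erase a) _ (mem_erase.2 ⟨hab.symm, hb⟩),
    ← mul_prod_erase (s.erase b) _ (mem_erase.2 ⟨hab, ha⟩), erase_right_comm]
  ring

theorem Finset.prod_erase_erase_union {ι M : Type*} [CommMonoid M] [DecidableEq ι]
    {s t : Finset ι} (hst : Disjoint s t) {a b : ι} (ha : a ∈ t) (hb : b ∈ s) (g : ι → M) :
    ∏ i ∈ ((s ∪ t).erase a).erase b, g i = (∏ i ∈ t.erase a, g i) * ∏ i ∈ s.erase b, g i := by
  have hsplit : ((s ∪ t).erase a).erase b = t.erase a ∪ s.erase b := by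
    ext i
    have hst' := disjoint_left.1 hst
    simp only [mem_erase, mem_union]
    grind
  rw [hsplit, prod_union (hst.symm.mono (erase_subset a t) (erase_subset b s))]

theorem Polynomial.natDegree_prod_erase_X_sub_C_lt {ι R : Type*} [CommRing R] [Nontrivial R]
    [DecidableEq ι] {s : Finset ι} {a : ι} (ha : a ∈ s) (c : ι → R) :
    (∏ i ∈ s.erase a, (X - C (c i))).natDegree < s.card := by
  rw [natDegree_finsetProd_X_sub_C_eq_card, card_erase_of_mem ha]
  exact Nat.sub_lt (card_pos.2 ⟨a, ha⟩) one_pos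

theorem Polynomial.eval_prod_attach_erase_X_sub_C {ι R : Type*} [CommRing R] [DecidableEq ι]
    {s : Finset ι} (a : s) (c : ι → R) (x : R) :
    (∏ n ∈ (univ : Finset s).erase a, (X - C (c n))).eval x = ∏ n ∈ s.erase a, (x - c n) := by
  simp only [eval_prod, eval_sub, eval_X, eval_C, univ_eq_attach]
  exact prod_erase_attach (fun n => x - c n) a

theorem Polynomial.sum_fin_coeff_mul_pow {R : Type*} [CommSemiring R] {p : R[X]} {m : ℕ}
    (hp : p.natDegree < m) (x : R) :
    ∑ r : Fin m, p.coeff r * x ^ (r : ℕ) = p.eval x := by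
  rw [eval_eq_sum_range' hp, Fin.sum_univ_eq_sum_range (fun i => p.coeff i * x ^ i)]

section RootsOfUnity

variable {K : Type*} [Field K] {n : ℕ} {ω : K}

theorem IsPrimitiveRoot.X_pow_sub_one_eq_prod_fin (hω : IsPrimitiveRoot ω n) (hn : 0 < n) :
    (X : K[X]) ^ n - 1 = ∏ i : Fin n, (X - C (ω ^ (i : ℕ))) := by
  rw [← C_1, X_pow_sub_C_eq_prod hω hn (one_pow n),
    ← Fin.prod_univ_eq_prod_range (fun i => X - C (ω ^ i * 1))]
  simp only [mul_one]

theorem IsPrimitiveRoot.geom_sum_pow_mul_eq_prod_erase (hω : IsPrimitiveRoot ω n) (a : Fin n)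
    (x : K) :
    ∑ t ∈ range n, x ^ t * ω ^ ((a : ℕ) * t)
      = ω⁻¹ ^ (a : ℕ) * ∏ i ∈ univ.erase a, (x - ω⁻¹ ^ (i : ℕ)) := by
  have hn : 0 < n := a.pos
  have hω0 : ω ^ (a : ℕ) ≠ 0 := pow_ne_zero _ (hω.ne_zero hn.ne')
  set P : K[X] := ∑ t ∈ range n, (C (ω ^ (a : ℕ)) * X) ^ t
  have hgeom : P * (C (ω ^ (a : ℕ)) * X - 1) = X ^ n - 1 := by
    rw [geom_sum_mul, mul_pow, ← C_pow, ← pow_mul, mul_comm (a : ℕ) n, pow_mul, hω.pow_eq_one,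
      one_pow, C_1, one_mul]
  have hlin : C (ω ^ (a : ℕ)) * X - 1 = C (ω ^ (a : ℕ)) * (X - C (ω⁻¹ ^ (a : ℕ))) := by
    rw [mul_sub, ← C_mul, inv_pow, mul_inv_cancel₀ hω0, C_1]
  have hroots : (X : K[X]) ^ n - 1
      = (X - C (ω⁻¹ ^ (a : ℕ))) * ∏ i ∈ univ.erase a, (X - C (ω⁻¹ ^ (i : ℕ))) := by
    rw [hω.inv.X_pow_sub_one_eq_prod_fin hn, ← mul_prod_erase _ _ (mem_univ a)]
  have hP : C (ω ^ (a : ℕ)) * P = ∏ i ∈ univ.erase a, (X - C (ω⁻¹ ^ (i : ℕ))) := by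
    refine mul_left_cancel₀ (X_sub_C_ne_zero (ω⁻¹ ^ (a : ℕ))) ?_
    rw [← hroots, ← hgeom, hlin]
    ring
  have heval := congrArg (eval x) hP
  simp only [P, eval_mul, eval_C, eval_finsetSum, eval_pow, eval_X, eval_prod, eval_sub] at heval
  rw [← heval, inv_pow, inv_mul_cancel_left₀ hω0]
  exact sum_congr rfl fun t _ => by rw [mul_pow, ← pow_mul, mul_comm]

theorem IsPrimitiveRoot.sum_mul_pow_sub_sum_mul_pow (hω : IsPrimitiveRoot ω n) {a b : Fin n}
    (hab : a ≠ b) {ι : Type*} [Fintype ι] (γ z : ι → K) (f : ℕ → K)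
    (hf : ∀ t, f t = ∑ j, γ j * z j ^ t) :
    ∑ t ∈ range n, f t * ω ^ ((a : ℕ) * t) - ∑ t ∈ range n, f t * ω ^ ((b : ℕ) * t)
      = (ω⁻¹ ^ (a : ℕ) - ω⁻¹ ^ (b : ℕ))
        * ∑ j, γ j * z j * ∏ i ∈ (univ.erase a).erase b, (z j - ω⁻¹ ^ (i : ℕ)) := by
  have hsum : ∀ c : Fin n, ∑ t ∈ range n, f t * ω ^ ((c : ℕ) * t)
      = ∑ j, γ j * (ω⁻¹ ^ (c : ℕ) * ∏ i ∈ univ.erase c, (z j - ω⁻¹ ^ (i : ℕ))) := by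
    intro c
    simp only [hf, sum_mul, ← hω.geom_sum_pow_mul_eq_prod_erase, mul_sum, mul_assoc]
    exact sum_comm
  rw [hsum, hsum, ← sum_sub_distrib, mul_sum]
  refine sum_congr rfl fun j _ => ?_
  rw [← mul_sub, mul_prod_erase_sub_mul_prod_erase (mem_univ a) (mem_univ b) hab
    (fun i : Fin n => ω⁻¹ ^ (i : ℕ))]
  ring

end RootsOfUnity

theorem Complex.isPrimitiveRoot_exp_neg (n : ℕ) (hn : n ≠ 0) :
    IsPrimitiveRoot (exp (-(2 * Real.pi * I) / n)) n := by
  rw [neg_div, exp_neg]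
  exact (isPrimitiveRoot_exp n hn).inv

section Hankel

variable {R : Type*} [CommRing R] {ι : Type*}

-- `rectVandermonde z 1 m` is the matrix `(z j ^ r)_{j, r < m}`.

theorem Matrix.eq_rectVandermonde_transpose_mul_diagonal_mul [Fintype ι] [DecidableEq ι]
    {m m' : ℕ} (γ z : ι → R)
    (H : Matrix (Fin m) (Fin m') R) (hH : ∀ r s, H r s = ∑ j, γ j * z j ^ ((s : ℕ) + r + 1)) :
    H = (rectVandermonde z 1 m)ᵀ * diagonal (fun j => γ j * z j) * rectVandermonde z 1 m' := by
  ext r s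
  rw [hH, mul_apply]
  simp only [mul_diagonal, transpose_apply, rectVandermonde_apply, Pi.one_apply, one_pow, mul_one]
  exact sum_congr rfl fun j _ => by ring

theorem Matrix.mul_rectVandermonde_transpose_apply {κ : Type*} {m : ℕ}
    (A : Matrix κ (Fin m) R) (p : κ → R[X]) (hA : ∀ i r, A i r = (p i).coeff r)
    (hp : ∀ i, (p i).natDegree < m) (z : ι → R) (i : κ) (j : ι) :
    (A * (rectVandermonde z 1 m)ᵀ) i j = (p i).eval (z j) := by
  simp only [mul_apply, transpose_apply, rectVandermonde_apply, Pi.one_apply, one_pow, mul_one, hA]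
  exact sum_fin_coeff_mul_pow (hp i) (z j)

theorem Matrix.mul_hankel_mul_transpose_apply [Fintype ι] {κ κ' : Type*} {m m' : ℕ}
    (γ z : ι → R)
    (H : Matrix (Fin m) (Fin m') R) (hH : ∀ r s, H r s = ∑ j, γ j * z j ^ ((s : ℕ) + r + 1))
    (A : Matrix κ (Fin m) R) (p : κ → R[X]) (hA : ∀ i r, A i r = (p i).coeff r)
    (hp : ∀ i, (p i).natDegree < m)
    (B : Matrix κ' (Fin m') R) (q : κ' → R[X]) (hB : ∀ k s, B k s = (q k).coeff s)
    (hq : ∀ k, (q k).natDegree < m') (i : κ) (k : κ') :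
    (A * H * Bᵀ) i k = ∑ j, γ j * z j * (p i).eval (z j) * (q k).eval (z j) := by
  classical
  have hfactor : A * H * Bᵀ = (A * (rectVandermonde z 1 m)ᵀ) * diagonal (fun j => γ j * z j)
      * (B * (rectVandermonde z 1 m')ᵀ)ᵀ := by
    rw [eq_rectVandermonde_transpose_mul_diagonal_mul γ z H hH, transpose_mul, transpose_transpose]
    simp only [Matrix.mul_assoc]
  rw [hfactor, mul_apply]
  simp only [mul_diagonal, transpose_apply,
    mul_rectVandermonde_transpose_apply A p hA hp, mul_rectVandermonde_transpose_apply B q hB hq]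
  exact sum_congr rfl fun j _ => by ring

end Hankel

theorem shifted_loewner_hankel_factorization_general (M N : ℕ)
    (γ z : Fin M → ℂ)
    (ω : ℂ) (hω : ω = Complex.exp (-(2 * Real.pi * Complex.I) / (2 * (N : ℂ))))
    (f fhat : ℕ → ℂ)
    (hf : ∀ k, f k = ∑ j, γ j * z j ^ k)
    (hfhat : ∀ m, fhat m = ∑ ℓ ∈ Finset.range (2 * N), f ℓ * ω ^ (m * ℓ))
    (S Γ : Finset (Fin (2 * N))) (hdisj : Disjoint S Γ)
    (hunion : S ∪ Γ = Finset.univ) (hScard : S.card = M)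
    (L1 : Matrix ↥Γ ↥S ℂ)
    (hL1 : ∀ ℓ k, L1 ℓ k = (fhat ℓ.1.1 - fhat k.1.1) / (ω⁻¹ ^ ℓ.1.1 - ω⁻¹ ^ k.1.1))
    (H1 : Matrix (Fin (2 * N - M)) (Fin M) ℂ)
    (hH1 : ∀ ℓ k, H1 ℓ k = f ((k : ℕ) + (ℓ : ℕ) + 1))
    (Q1 : Matrix ↥Γ (Fin (2 * N - M)) ℂ)
    (hQ1 : ∀ ℓ r, Q1 ℓ r
      = (∏ n ∈ Finset.univ.erase ℓ, (Polynomial.X - Polynomial.C (ω⁻¹ ^ n.1.1))).coeff (r : ℕ))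
    (Q2 : Matrix ↥S (Fin M) ℂ)
    (hQ2 : ∀ k r, Q2 k r
      = (∏ n ∈ Finset.univ.erase k, (Polynomial.X - Polynomial.C (ω⁻¹ ^ n.1.1))).coeff (r : ℕ)) :
    L1 = Q1 * H1 * Q2ᵀ := by
  ext ℓ k
  have hprim : IsPrimitiveRoot ω (2 * N) := by
    rw [hω]
    exact_mod_cast Complex.isPrimitiveRoot_exp_neg (2 * N) ℓ.1.pos.ne'
  have hΓcard : Γ.card = 2 * N - M := by
    have hcard := card_union_of_disjoint hdisj
    rw [hunion, card_univ, Fintype.card_fin] at hcard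
    omega
  have hℓk : ℓ.1 ≠ k.1 := fun h => disjoint_left.1 hdisj k.2 (h ▸ ℓ.2)
  have hnodes : ω⁻¹ ^ ℓ.1.1 ≠ ω⁻¹ ^ k.1.1 := fun h =>
    hℓk (Fin.ext (hprim.inv.pow_inj ℓ.1.2 k.1.2 h))
  set p := fun i : Γ => ∏ n ∈ univ.erase i, (X - C (ω⁻¹ ^ n.1.1))
  set q := fun i : S => ∏ n ∈ univ.erase i, (X - C (ω⁻¹ ^ n.1.1))
  have hp : ∀ i, (p i).natDegree < 2 * N - M := fun i => by
    rw [← hΓcard, ← Fintype.card_coe, ← card_univ]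
    exact natDegree_prod_erase_X_sub_C_lt (mem_univ i) _
  have hq : ∀ i, (q i).natDegree < M := fun i => by
    rw [← hScard, ← Fintype.card_coe, ← card_univ]
    exact natDegree_prod_erase_X_sub_C_lt (mem_univ i) _
  have hpq : ∀ x, ∏ i ∈ (univ.erase ℓ.1).erase k.1, (x - ω⁻¹ ^ i.1)
      = (p ℓ).eval x * (q k).eval x := fun x => by
    rw [← hunion, prod_erase_erase_union hdisj ℓ.2 k.2]
    exact congrArg₂ (· * ·) (eval_prod_attach_erase_X_sub_C ℓ _ x).symm
      (eval_prod_attach_erase_X_sub_C k _ x).symm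
  rw [mul_hankel_mul_transpose_apply γ z H1 (fun r s => (hH1 r s).trans (hf _)) Q1 p hQ1 hp
    Q2 q hQ2 hq, hL1, hfhat, hfhat, hprim.sum_mul_pow_sub_sum_mul_pow hℓk γ z f hf,
    mul_div_cancel_left₀ _ (sub_ne_zero.2 hnodes)]
  simp only [hpq, mul_assoc]

theorem shifted_loewner_hankel_factorization (M N : ℕ) (hMN : M < N)
    (γ z : Fin M → ℂ) (hγ : ∀ j, γ j ≠ 0) (hz0 : ∀ j, z j ≠ 0)
    (hzinj : Function.Injective z)
    (ω : ℂ) (hω : ω = Complex.exp (-(2 * Real.pi * Complex.I) / (2 * (N : ℂ))))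
    (f fhat : ℕ → ℂ)
    (hf : ∀ k, f k = ∑ j, γ j * z j ^ k)
    (hfhat : ∀ m, fhat m = ∑ ℓ ∈ Finset.range (2 * N), f ℓ * ω ^ (m * ℓ))
    (S Γ : Finset (Fin (2 * N))) (hdisj : Disjoint S Γ)
    (hunion : S ∪ Γ = Finset.univ) (hScard : S.card = M)
    (L1 : Matrix ↥Γ ↥S ℂ)
    (hL1 : ∀ ℓ k, L1 ℓ k = (fhat ℓ.1.1 - fhat k.1.1) / (ω⁻¹ ^ ℓ.1.1 - ω⁻¹ ^ k.1.1))
    (H1 : Matrix (Fin (2 * N - M)) (Fin M) ℂ)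
    (hH1 : ∀ ℓ k, H1 ℓ k = f ((k : ℕ) + (ℓ : ℕ) + 1))
    (Q1 : Matrix ↥Γ (Fin (2 * N - M)) ℂ)
    (hQ1 : ∀ ℓ r, Q1 ℓ r
      = (∏ n ∈ Finset.univ.erase ℓ, (Polynomial.X - Polynomial.C (ω⁻¹ ^ n.1.1))).coeff (r : ℕ))
    (Q2 : Matrix ↥S (Fin M) ℂ)
    (hQ2 : ∀ k r, Q2 k r
      = (∏ n ∈ Finset.univ.erase k, (Polynomial.X - Polynomial.C (ω⁻¹ ^ n.1.1))).coeff (r : ℕ)) :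
    L1 = Q1 * H1 * Q2ᵀ :=
  shifted_loewner_hankel_factorization_general M N γ z ω hω f fhat hf hfhat S Γ hdisj hunion hScard
    L1 hL1 H1 hH1 Q1 hQ1 Q2 hQ2
end
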